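/- Let $M$ be a finite loopless matroid on a linearly ordered ground set $E$ with least element $0$, of rank $r+1$. Then the reduced characteristic polynomial $\overline{\chi_M}(q) = \chi_M(q)/(q-1)$ satisfies $\overline{\chi_M}(q) = \sum_{i=0}^{r} (-1)^i f_i(\overline{\mathrm{BC}}(M)) q^{r-i}$, where $f_i(\overline{\mathrm{BC}}(M))$ is the number of cardinality-$i$ subsets of $E \setminus \{0\}$ containing no broken circuit of $M$. -/

import Mathlib

open Finset Polynomial

open scoped Classical in
/-- The rank of a set `X` in a matroid `M`. -/
noncomputable def matroidRank {α : Type*} (M : Matroid α) (X : Set α) : ℕ :=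
  sSup {n | ∃ I : Finset α, ↑I ⊆ X ∧ M.Indep ↑I ∧ I.card = n}

/-- A circuit of a matroid: a minimal dependent set (here as a finset). -/
def IsMatroidCircuit {α : Type*} (M : Matroid α) (C : Finset α) : Prop :=
  ↑C ⊆ M.E ∧ ¬ M.Indep ↑C ∧ ∀ D : Finset α, D ⊂ C → M.Indep ↑D

/-- A broken circuit: a circuit with its least element (in the linear order) removed. -/
def IsBrokenCircuit {α : Type*} [LinearOrder α] (M : Matroid α) (B : Finset α) : Prop :=
  ∃ C : Finset α, IsMatroidCircuit M C ∧ ∃ h : C.Nonempty, B = C.erase (C.min' h)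

open scoped Classical in
/-- The characteristic polynomial of a matroid `M` of rank `r + 1`, with respect to
a Möbius function `μ` of the lattice of flats. -/
noncomputable def charPoly {α : Type*} [Fintype α] (M : Matroid α) (μ : Finset α → ℤ)
    (r : ℕ) : Polynomial ℤ :=
  ∑ F ∈ Finset.univ.filter (fun F : Finset α => M.IsFlat ↑F),
    C (μ F) * X ^ (r + 1 - matroidRank M ↑F)


/-!
Whitney's formula writes the Möbius function of the lattice of flats as
`μ(F) = ∑_{cl S = F} (-1)^|S|`, so `χ_M(q) = ∑_S (-1)^|S| q^(r+1-rk S)` over all subsets `S`.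
A set contains a broken circuit iff some `e` lies in the closure of `{y ∈ S | e < y}`; toggling
the least such `e` in `S` changes neither the closure of `S` nor that least element, so these sets
cancel in pairs. Broken-circuit-free sets are independent and contribute `(-1)^|S| q^(r+1-|S|)`.
Finally the least element `0` lies in no broken circuit, so the broken-circuit-free sets come in
pairs `T`, `T ∪ {0}` with `0 ∉ T`, whose contributions add up to `(q - 1) (-1)^|T| q^(r-|T|)`.
-/

open scoped Classical symmDiff

section Rank

variable {α : Type*} [Finite α] (M : Matroid α)

theorem matroidRank_eq_eRk (X : Set α) : (matroidRank M X : ℕ∞) = M.eRk X := by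
  obtain ⟨I, hI⟩ := M.exists_isBasis' X
  have hIfin : I.Finite := I.toFinite
  have hmax : IsGreatest {n | ∃ J : Finset α, ↑J ⊆ X ∧ M.Indep ↑J ∧ J.card = n}
      hIfin.toFinset.card := by
    refine ⟨⟨hIfin.toFinset, by simpa using hI.subset, by simpa using hI.indep, rfl⟩, ?_⟩
    rintro _ ⟨J, hJX, hJ, rfl⟩
    have hle := hJ.encard_le_eRk_of_subset hJX
    rwa [← hI.encard_eq_eRk, Set.encard_coe_eq_coe_finsetCard,
      hIfin.encard_eq_coe_toFinset_card, Nat.cast_le] at hle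
  rw [matroidRank, hmax.csSup_eq, ← hI.encard_eq_eRk, hIfin.encard_eq_coe_toFinset_card]

theorem matroidRank_closure_of_indep {S : Finset α} (hS : M.Indep ↑S) :
    matroidRank M (M.closure ↑S) = S.card := by
  have h := matroidRank_eq_eRk M (M.closure ↑S)
  rwa [Matroid.eRk_closure_eq, hS.eRk_eq_encard, Set.encard_coe_eq_coe_finsetCard,
    Nat.cast_inj] at h

theorem card_le_matroidRank_univ {I : Finset α} (hI : M.Indep ↑I) :
    I.card ≤ matroidRank M Set.univ := by
  have h := hI.encard_le_eRk_of_subset (Set.subset_univ _)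
  rwa [← matroidRank_eq_eRk, Set.encard_coe_eq_coe_finsetCard, Nat.cast_le] at h

end Rank

theorem Matroid.closure_eq_closure_of_sdiff_singleton_eq {α : Type*} {M : Matroid α}
    {X Y : Set α} {e : α} (hXY : X \ {e} = Y \ {e}) (he : e ∈ M.closure (X \ {e})) :
    M.closure X = M.closure Y := by
  rw [← M.closure_sdiff_singleton_eq_closure he, hXY,
    M.closure_sdiff_singleton_eq_closure (hXY ▸ he)]

theorem isMatroidCircuit_iff_isCircuit {α : Type*} {M : Matroid α} {C : Finset α} :
    IsMatroidCircuit M C ↔ M.IsCircuit ↑C := by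
  rw [Matroid.isCircuit_iff_forall_ssubset, Matroid.Dep, IsMatroidCircuit]
  refine ⟨fun ⟨hCE, hC, hsub⟩ => ⟨⟨hC, hCE⟩, fun I hI => ?_⟩,
    fun ⟨⟨hC, hCE⟩, hsub⟩ => ⟨hCE, hC, fun D hD => hsub (coe_ssubset.2 hD)⟩⟩
  lift I to Finset α using C.finite_toSet.subset hI.subset
  exact hsub I (coe_ssubset.1 hI)

section BrokenCircuit

variable {α : Type*} [LinearOrder α] {M : Matroid α}

def IsBrokenCircuitFree (M : Matroid α) (S : Finset α) : Prop :=
  ∀ B, IsBrokenCircuit M B → ¬ B ⊆ S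

theorem IsBrokenCircuitFree.anti {S T : Finset α} (hT : IsBrokenCircuitFree M T) (hST : S ⊆ T) :
    IsBrokenCircuitFree M S :=
  fun B hB hBS => hT B hB (hBS.trans hST)

theorem IsBrokenCircuitFree.indep {S : Finset α} (hS : IsBrokenCircuitFree M S)
    (hSE : ↑S ⊆ M.E) : M.Indep ↑S := by
  by_contra hdep
  obtain ⟨C, hCS, hC⟩ := Matroid.Dep.exists_isCircuit_subset ⟨hdep, hSE⟩
  lift C to Finset α using S.finite_toSet.subset hCS
  have hne : C.Nonempty := coe_nonempty.1 hC.nonempty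
  exact hS _ ⟨C, isMatroidCircuit_iff_isCircuit.2 hC, hne, rfl⟩
    ((C.erase_subset _).trans (coe_subset.1 hCS))

theorem notMem_of_isBrokenCircuit {b : α} (hb : ∀ x, b ≤ x) {B : Finset α}
    (hB : IsBrokenCircuit M B) : b ∉ B := by
  obtain ⟨C, -, hne, rfl⟩ := hB
  intro hbB
  obtain ⟨hbmin, hbC⟩ := mem_erase.1 hbB
  exact hbmin (le_antisymm (hb _) (C.min'_le b hbC))

theorem isBrokenCircuitFree_insert_iff {b : α} (hb : ∀ x, b ≤ x) {T : Finset α} :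
    IsBrokenCircuitFree M (insert b T) ↔ IsBrokenCircuitFree M T :=
  ⟨fun h => h.anti (T.subset_insert b), fun h B hB hBT =>
    h B hB ((subset_insert_iff_of_notMem (notMem_of_isBrokenCircuit hb hB)).1 hBT)⟩

theorem IsBrokenCircuitFree.card_lt_matroidRank_univ [Finite α] (hE : M.E = Set.univ) {b : α}
    (hb : ∀ x, b ≤ x) {T : Finset α} (hT : IsBrokenCircuitFree M T) (hbT : b ∉ T) :
    T.card < matroidRank M Set.univ := by
  have hind := ((isBrokenCircuitFree_insert_iff hb).2 hT).indep (hE ▸ Set.subset_univ _)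
  simpa [card_insert_of_notMem hbT, Nat.succ_le_iff] using card_le_matroidRank_univ M hind

variable [Fintype α]

/-- The least elements of the circuits whose broken circuit lies in `S`
(`brokenCircuitMins_nonempty_iff`). -/
noncomputable def brokenCircuitMins (M : Matroid α) (S : Finset α) : Finset α :=
  univ.filter fun e => e ∈ M.closure ↑(S.filter (e < ·))

theorem mem_brokenCircuitMins {S : Finset α} {e : α} :
    e ∈ brokenCircuitMins M S ↔ e ∈ M.closure ↑(S.filter (e < ·)) := by
  simp [brokenCircuitMins]

theorem min'_mem_brokenCircuitMins {S B : Finset α} (hBS : B ⊆ S) {C : Finset α}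
    (hC : IsMatroidCircuit M C) (hne : C.Nonempty) (hB : B = C.erase (C.min' hne)) :
    C.min' hne ∈ brokenCircuitMins M S := by
  rw [mem_brokenCircuitMins]
  refine M.closure_subset_closure ?_
    ((isMatroidCircuit_iff_isCircuit.1 hC).mem_closure_sdiff_singleton_of_mem (C.min'_mem hne))
  intro x ⟨hxC, hxe⟩
  have hxB : x ∈ B := hB ▸ mem_erase.2 ⟨hxe, hxC⟩
  exact mem_filter.2 ⟨hBS hxB, lt_of_le_of_ne (C.min'_le x hxC) (Ne.symm hxe)⟩

theorem exists_isBrokenCircuit_subset_of_mem_brokenCircuitMins {S : Finset α} {e : α}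
    (he : e ∈ brokenCircuitMins M S) : ∃ B, IsBrokenCircuit M B ∧ B ⊆ S := by
  rw [mem_brokenCircuitMins] at he
  obtain ⟨C, hCsub, hC, heC⟩ := (Matroid.mem_closure_iff_exists_isCircuit (by simp)).1 he
  lift C to Finset α using Set.toFinite C
  have hCe : ∀ x ∈ C, x ≠ e → x ∈ S ∧ e < x := fun x hxC hxe => by
    simpa [hxe] using hCsub hxC
  have hne : C.Nonempty := ⟨e, heC⟩
  have hmin : C.min' hne = e :=
    (C.min'_eq_iff hne e).2 ⟨heC, fun x hxC => by
      obtain rfl | hxe := eq_or_ne x e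
      exacts [le_rfl, (hCe x hxC hxe).2.le]⟩
  refine ⟨C.erase e, ⟨C, isMatroidCircuit_iff_isCircuit.2 hC, hne, hmin ▸ rfl⟩,
    fun x hx => ?_⟩
  obtain ⟨hxe, hxC⟩ := mem_erase.1 hx
  exact (hCe x hxC hxe).1

theorem brokenCircuitMins_nonempty_iff {S : Finset α} :
    (brokenCircuitMins M S).Nonempty ↔ ¬ IsBrokenCircuitFree M S := by
  refine ⟨fun ⟨e, he⟩ hS => ?_, fun hS => ?_⟩
  · obtain ⟨B, hB, hBS⟩ := exists_isBrokenCircuit_subset_of_mem_brokenCircuitMins he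
    exact hS B hB hBS
  · simp only [IsBrokenCircuitFree, not_forall, not_not] at hS
    obtain ⟨B, ⟨C, hC, hne, hB⟩, hBS⟩ := hS
    exact ⟨_, min'_mem_brokenCircuitMins hBS hC hne hB⟩

end BrokenCircuit

section SymmDiff

variable {α : Type*} [DecidableEq α]

theorem Finset.erase_symmDiff_singleton (S : Finset α) (e : α) :
    (S ∆ {e}).erase e = S.erase e := by
  ext x
  by_cases hx : x = e <;> simp [mem_symmDiff, hx]

theorem Finset.neg_one_pow_card_symmDiff_singleton {R : Type*} [Ring R] (S : Finset α) (e : α) :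
    (-1 : R) ^ (S ∆ {e}).card = -(-1) ^ S.card := by
  by_cases he : e ∈ S
  · have hS : S ∆ {e} = S.erase e := by
      ext x; by_cases hx : x = e <;> simp [mem_symmDiff, hx, he]
    rw [hS, ← card_erase_add_one he, pow_succ, mul_neg_one, neg_neg]
  · have hS : S ∆ {e} = insert e S := by
      ext x; by_cases hx : x = e <;> simp [mem_symmDiff, hx, he]
    rw [hS, card_insert_of_notMem he, pow_succ, mul_neg_one]

end SymmDiff

section Involution

variable {α : Type*} [LinearOrder α] [Fintype α] {M : Matroid α}

/-- `e` already lies in the closure of `T \ {e}`, so adding or removing it is invisible. -/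
theorem closure_eq_closure_of_erase_eq {S T T' : Finset α} {e : α}
    (he : e ∈ brokenCircuitMins M S) (hST : S.filter (e < ·) ⊆ T)
    (hTT' : T'.erase e = T.erase e) :
    M.closure ↑T' = M.closure ↑T := by
  have hsdiff : (↑T' : Set α) \ {e} = ↑T \ {e} := by rw [← coe_erase, ← coe_erase, hTT']
  refine Matroid.closure_eq_closure_of_sdiff_singleton_eq hsdiff ?_
  rw [hsdiff, ← coe_erase]
  refine M.closure_subset_closure (fun y hy => ?_) (mem_brokenCircuitMins.1 he)
  exact mem_erase.2 ⟨(mem_filter.1 hy).2.ne', hST hy⟩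

theorem mem_brokenCircuitMins_symmDiff_singleton_iff {S : Finset α} {e x : α}
    (he : e ∈ brokenCircuitMins M S) (hxe : x ≤ e) :
    x ∈ brokenCircuitMins M (S ∆ {e}) ↔ x ∈ brokenCircuitMins M S := by
  have hST : S.filter (e < ·) ⊆ S.filter (x < ·) :=
    monotone_filter_right S fun _ _ => hxe.trans_lt
  rw [mem_brokenCircuitMins, mem_brokenCircuitMins, closure_eq_closure_of_erase_eq he hST
    (by rw [← filter_erase, ← filter_erase, erase_symmDiff_singleton])]

theorem min'_brokenCircuitMins_symmDiff_singleton {S : Finset α}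
    (h : (brokenCircuitMins M S).Nonempty) :
    ∃ h' : (brokenCircuitMins M (S ∆ {(brokenCircuitMins M S).min' h})).Nonempty,
      (brokenCircuitMins M (S ∆ {(brokenCircuitMins M S).min' h})).min' h' =
        (brokenCircuitMins M S).min' h := by
  set e := (brokenCircuitMins M S).min' h
  have he : e ∈ brokenCircuitMins M S := min'_mem _ h
  have he' : e ∈ brokenCircuitMins M (S ∆ {e}) :=
    (mem_brokenCircuitMins_symmDiff_singleton_iff he le_rfl).2 he
  refine ⟨⟨e, he'⟩, (min'_eq_iff _ _ e).2 ⟨he', fun x hx => ?_⟩⟩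
  by_contra! hxe
  exact hxe.not_ge (min'_le _ x
    ((mem_brokenCircuitMins_symmDiff_singleton_iff he hxe.le).1 hx))

theorem sum_not_isBrokenCircuitFree_eq_zero {R : Type*} [Ring R] (f : Set α → R) :
    ∑ S ∈ univ.filter (fun S => ¬ IsBrokenCircuitFree M S),
      (-1 : R) ^ S.card * f (M.closure ↑S) = 0 := by
  have hne : ∀ S ∈ univ.filter (fun S => ¬ IsBrokenCircuitFree M S),
      (brokenCircuitMins M S).Nonempty := fun S hS =>
    brokenCircuitMins_nonempty_iff.2 (mem_filter.1 hS).2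
  refine sum_involution (fun S hS => S ∆ {(brokenCircuitMins M S).min' (hne S hS)})
    (fun S hS => ?_) (fun S hS _ => ?_) (fun S hS => ?_) (fun S hS => ?_)
  · rw [closure_eq_closure_of_erase_eq (min'_mem _ _) (filter_subset _ S)
      (erase_symmDiff_singleton _ _), neg_one_pow_card_symmDiff_singleton, neg_mul,
      add_neg_cancel]
  · simp [symmDiff_eq_left]
  · obtain ⟨h', -⟩ := min'_brokenCircuitMins_symmDiff_singleton (hne S hS)
    exact mem_filter.2 ⟨mem_univ _, brokenCircuitMins_nonempty_iff.1 h'⟩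
  · obtain ⟨h', hmin⟩ := min'_brokenCircuitMins_symmDiff_singleton (hne S hS)
    simp only [hmin, symmDiff_symmDiff_cancel_right]

end Involution

theorem eq_of_forall_sum_filter_le_eq {β R : Type*} [Fintype β] [PartialOrder β]
    [AddCommGroup R] {P : β → Prop} {f g : β → R}
    (h : ∀ F, P F → ∑ G ∈ univ.filter (fun G => P G ∧ G ≤ F), f G =
      ∑ G ∈ univ.filter (fun G => P G ∧ G ≤ F), g G)
    {F : β} (hF : P F) : f F = g F := by
  induction F using WellFoundedLT.induction with
  | _ F ih =>
    have hFmem : F ∈ univ.filter (fun G => P G ∧ G ≤ F) := by simp [hF]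
    have hsum := h F hF
    rw [← add_sum_erase _ _ hFmem, ← add_sum_erase _ _ hFmem,
      sum_congr rfl fun G hG => ?_] at hsum
    · exact add_right_cancel hsum
    obtain ⟨hGF, hG, hGle⟩ := by simpa using hG
    exact ih G (lt_of_le_of_ne hGle hGF) hG

section Whitney

variable {α : Type*} [Fintype α] (M : Matroid α)

def IsMobiusOnFlats (μ : Finset α → ℤ) : Prop :=
  ∀ F : Finset α, M.IsFlat ↑F →
    (∑ G ∈ univ.filter (fun G : Finset α => M.IsFlat ↑G ∧ (G : Set α) ⊆ ↑F), μ G)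
      = if (F : Set α) = M.closure ∅ then 1 else 0

noncomputable def closureFinset (S : Finset α) : Finset α := (M.closure ↑S).toFinset

@[simp]
theorem coe_closureFinset (S : Finset α) : (↑(closureFinset M S) : Set α) = M.closure ↑S :=
  Set.coe_toFinset _

/-- Whitney's expression for the Möbius function of the lattice of flats
(`mobiusOfClosure_eq`). -/
noncomputable def mobiusOfClosure (F : Finset α) : ℤ :=
  ∑ S ∈ univ.filter (fun S => closureFinset M S = F), (-1 : ℤ) ^ S.card

theorem sum_mobiusOfClosure (hE : M.E = Set.univ) {F : Finset α} (hF : M.IsFlat ↑F) :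
    ∑ G ∈ univ.filter (fun G : Finset α => M.IsFlat ↑G ∧ G ⊆ F), mobiusOfClosure M G =
      if F = ∅ then 1 else 0 := by
  have hcl_subset : ∀ S : Finset α, closureFinset M S ⊆ F ↔ S ⊆ F := fun S => by
    rw [← coe_subset, ← coe_subset, coe_closureFinset]
    exact ⟨(M.subset_closure _ (hE ▸ Set.subset_univ _)).trans,
      fun hSF => hF.closure ▸ M.closure_subset_closure hSF⟩
  have hfiber : ∀ G ∈ univ.filter (fun G : Finset α => M.IsFlat ↑G ∧ G ⊆ F),
      mobiusOfClosure M G =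
        ∑ S ∈ F.powerset with closureFinset M S = G, (-1 : ℤ) ^ S.card := by
    intro G hG
    refine sum_congr (ext fun S => ?_) fun _ _ => rfl
    have hGF := (mem_filter.1 hG).2.2
    simp only [mem_filter, mem_univ, true_and, mem_powerset]
    exact ⟨fun hS => ⟨(hcl_subset S).1 (hS ▸ hGF), hS⟩, And.right⟩
  rw [sum_congr rfl hfiber, sum_fiberwise_of_maps_to fun S hS => ?_,
    sum_powerset_neg_one_pow_card]
  simpa [hcl_subset] using mem_powerset.1 hS

theorem mobiusOfClosure_eq (hE : M.E = Set.univ) (h_loopless : ∀ a : α, M.Indep {a})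
    {μ : Finset α → ℤ} (hμ : IsMobiusOnFlats M μ) {F : Finset α} (hF : M.IsFlat ↑F) :
    μ F = mobiusOfClosure M F := by
  have hloops : M.closure ∅ = ∅ := Set.eq_empty_of_forall_notMem fun a ha =>
    (Matroid.indep_singleton.1 (h_loopless a)).not_isLoop ha
  refine eq_of_forall_sum_filter_le_eq (P := fun F : Finset α => M.IsFlat ↑F) (fun F hF => ?_) hF
  have hμF : ∑ G ∈ univ.filter (fun G : Finset α => M.IsFlat ↑G ∧ G ⊆ F), μ G =
      if F = ∅ then 1 else 0 := by
    simpa [hloops] using hμ F hF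
  convert hμF.trans (sum_mobiusOfClosure M hE hF).symm

theorem sum_isFlat_mobiusOfClosure_mul {R : Type*} [Ring R] (f : Set α → R) :
    ∑ F ∈ univ.filter (fun F : Finset α => M.IsFlat ↑F), (mobiusOfClosure M F : R) * f ↑F =
      ∑ S : Finset α, (-1 : R) ^ S.card * f (M.closure ↑S) := by
  simp only [mobiusOfClosure, Int.cast_sum, Int.cast_pow, Int.cast_neg, Int.cast_one, sum_mul]
  calc _ = ∑ F ∈ univ.filter (fun F : Finset α => M.IsFlat ↑F),
        ∑ S ∈ univ.filter (fun S => closureFinset M S = F),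
          (-1 : R) ^ S.card * f (M.closure ↑S) :=
        sum_congr rfl fun F _ => sum_congr rfl fun S hS => by
          rw [← (mem_filter.1 hS).2, coe_closureFinset]
    _ = _ := sum_fiberwise_of_maps_to (fun S _ => by simp) _

theorem charPoly_eq_sum_neg_one_pow_mul (hE : M.E = Set.univ)
    (h_loopless : ∀ a : α, M.Indep {a}) {μ : Finset α → ℤ} (hμ : IsMobiusOnFlats M μ)
    (r : ℕ) :
    charPoly M μ r =
      ∑ S : Finset α, (-1) ^ S.card * X ^ (r + 1 - matroidRank M (M.closure ↑S)) := by
  rw [charPoly, ← sum_isFlat_mobiusOfClosure_mul M fun F => X ^ (r + 1 - matroidRank M F)]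
  refine sum_congr rfl fun F hF => ?_
  rw [mobiusOfClosure_eq M hE h_loopless hμ (mem_filter.1 hF).2, eq_intCast]

end Whitney

section Subsets

variable {α R : Type*}

theorem sum_filter_univ_eq_sum_filter_powerset_erase [AddCommMonoid R] [Fintype α]
    [DecidableEq α] (p : Finset α → Prop) [DecidablePred p] {b : α}
    (hp : ∀ T, b ∉ T → (p (insert b T) ↔ p T)) (f : Finset α → R) :
    ∑ S ∈ univ.filter p, f S =
      ∑ T ∈ (univ.erase b).powerset.filter p, (f T + f (insert b T)) := by
  have huniv : (univ : Finset (Finset α)) = (insert b (univ.erase b)).powerset := by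
    rw [insert_erase (mem_univ b), powerset_univ]
  rw [huniv, sum_filter, sum_powerset_insert (notMem_erase b _), sum_filter, ← sum_add_distrib]
  refine sum_congr rfl fun T hT => ?_
  have hbT : b ∉ T := notMem_of_mem_powerset_of_notMem hT (notMem_erase b _)
  by_cases hpT : p T <;> simp [hpT, hp T hbT]

theorem sum_filter_neg_one_pow_mul_pow_eq_mul_sum [CommRing R] [Fintype α] [DecidableEq α]
    (p : Finset α → Prop) [DecidablePred p] {b : α}
    (hp : ∀ T, b ∉ T → (p (insert b T) ↔ p T)) {r : ℕ}
    (hr : ∀ T ∈ (univ.erase b).powerset.filter p, T.card ≤ r) (x : R) :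
    ∑ S ∈ univ.filter p, (-1) ^ S.card * x ^ (r + 1 - S.card) =
      (x - 1) * ∑ T ∈ (univ.erase b).powerset.filter p, (-1) ^ T.card * x ^ (r - T.card) := by
  rw [sum_filter_univ_eq_sum_filter_powerset_erase p hp, mul_sum]
  refine sum_congr rfl fun T hT => ?_
  have hbT : b ∉ T := notMem_of_mem_powerset_of_notMem (mem_filter.1 hT).1 (notMem_erase b _)
  have hTr := hr T hT
  rw [card_insert_of_notMem hbT, show r + 1 - T.card = r - T.card + 1 by omega,
    show r + 1 - (T.card + 1) = r - T.card by omega]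
  ring

theorem sum_filter_powerset_eq_sum_range_card_nsmul [AddCommMonoid R] (s : Finset α)
    (p : Finset α → Prop) [DecidablePred p] {n : ℕ}
    (hn : ∀ T ∈ s.powerset.filter p, T.card < n) (f : ℕ → R) :
    ∑ T ∈ s.powerset.filter p, f T.card =
      ∑ i ∈ range n, ((s.powersetCard i).filter p).card • f i := by
  rw [← sum_fiberwise_of_maps_to fun T hT => mem_range.2 (hn T hT)]
  refine sum_congr rfl fun i _ => ?_
  rw [sum_congr rfl fun T hT => by rw [(mem_filter.1 hT).2], sum_const, filter_filter,
    powersetCard_eq_filter, filter_filter]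
  simp only [and_comm]

end Subsets

open scoped Classical in
/-- For a finite loopless matroid `M` of rank `r+1` on a linearly ordered
ground set with least element `b`, the reduced characteristic polynomial
`χ̄_M(q) = χ_M(q)/(q-1)` equals `∑_{i=0}^{r} (-1)^i f_i(BC̄(M)) q^(r-i)`, where
`f_i(BC̄(M))` is the number of cardinality-`i` subsets of `E \ {b}` containing no broken
circuit.  Equivalently, `χ_M(q) = (q-1) * ∑_{i=0}^{r} (-1)^i f_i(BC̄(M)) q^(r-i)`. -/
theorem reduced_charPoly_eq_reduced_broken_circuit_fvector
    {α : Type*} [Fintype α] [LinearOrder α]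
    (M : Matroid α) (hE : M.E = Set.univ)
    (h_loopless : ∀ a : α, M.Indep {a})
    (r : ℕ) (h_rank : matroidRank M Set.univ = r + 1)
    (b : α) (hb : ∀ x : α, b ≤ x)
    (μ : Finset α → ℤ)
    (hμ : ∀ F : Finset α, M.IsFlat ↑F →
      (∑ G ∈ Finset.univ.filter (fun G : Finset α => M.IsFlat ↑G ∧ (G : Set α) ⊆ ↑F), μ G)
        = if (F : Set α) = M.closure ∅ then 1 else 0) :
    charPoly M μ r =
      (X - 1) *
        ∑ i ∈ Finset.range (r + 1),
          C ((-1 : ℤ) ^ i *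
            ((((Finset.univ.erase b).powersetCard i).filter
              (fun S : Finset α => ∀ B, IsBrokenCircuit M B → ¬ B ⊆ S)).card : ℤ)) *
            X ^ (r - i) := by
  have hcard : ∀ T ∈ (univ.erase b).powerset.filter (IsBrokenCircuitFree M), T.card ≤ r := by
    intro T hT
    obtain ⟨hTb, hT⟩ := mem_filter.1 hT
    have hlt := hT.card_lt_matroidRank_univ hE hb
      (notMem_of_mem_powerset_of_notMem hTb (notMem_erase b _))
    omega
  calc charPoly M μ r
      = ∑ S : Finset α, (-1) ^ S.card * X ^ (r + 1 - matroidRank M (M.closure ↑S)) :=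
        charPoly_eq_sum_neg_one_pow_mul M hE h_loopless hμ r
    _ = ∑ S ∈ univ.filter (IsBrokenCircuitFree M), (-1) ^ S.card * X ^ (r + 1 - S.card) := by
        rw [← sum_filter_add_sum_filter_not _ (IsBrokenCircuitFree M),
          sum_not_isBrokenCircuitFree_eq_zero fun F => X ^ (r + 1 - matroidRank M F), add_zero]
        exact sum_congr rfl fun S hS => by
          rw [matroidRank_closure_of_indep M
            ((mem_filter.1 hS).2.indep (hE ▸ Set.subset_univ _))]
    _ = (X - 1) * ∑ T ∈ (univ.erase b).powerset.filter (IsBrokenCircuitFree M),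
          (-1) ^ T.card * X ^ (r - T.card) :=
        sum_filter_neg_one_pow_mul_pow_eq_mul_sum _ (fun _ _ => isBrokenCircuitFree_insert_iff hb)
          hcard X
    _ = _ := by
        rw [sum_filter_powerset_eq_sum_range_card_nsmul _ _ (fun T hT => Nat.lt_succ_of_le
          (hcard T hT)) fun i => (-1) ^ i * X ^ (r - i)]
        refine congrArg _ (sum_congr rfl fun i _ => ?_)
        rw [nsmul_eq_mul, map_mul, map_pow, map_neg, map_one, map_natCast, mul_left_comm, mul_assoc]
        -- the statement decides its filter by `Fintype.decidableForallFintype`, not classically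
        unfold IsBrokenCircuitFree
        congr
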